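/- For every integer A ≥ 3 and every t ∈ (0, π/(2A)], the inequality sin(2At)/(A·sin(2t)) ≤ (sin(At)/(A·sin(t)))⁴ holds. -/

import Mathlib

/-!
With `s = A t` and the double-angle formula, the inequality reduces to
`A³ sin³ t cos s ≤ sin³ s cos t`, i.e. to `ψ s ≤ ψ t` for `ψ x = x³ cos x / sin³ x`.
The derivative of `ψ` has the sign of `3 sin x cos x - x (1 + 2 cos² x)`, which is nonpositive
on `(0, π/2]` by the Cusa–Huygens inequality; that inequality in turn follows from
`x cos x ≤ sin x` by a second monotonicity argument.
-/

open Real Set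

lemma mul_cos_le_sin {x : ℝ} (hx₀ : 0 ≤ x) (hx : x ≤ π) : x * cos x ≤ sin x := by
  rcases lt_or_ge x (π / 2) with hlt | hge
  · have hcos : 0 < cos x := cos_pos_of_mem_Ioo ⟨by linarith [pi_pos], hlt⟩
    have := le_tan hx₀ hlt
    rwa [tan_eq_sin_div_cos, le_div_iff₀ hcos] at this
  · have hcos : cos x ≤ 0 := cos_nonpos_of_pi_div_two_le_of_le hge (by linarith [pi_pos])
    nlinarith [sin_nonneg_of_nonneg_of_le_pi hx₀ hx]

/-- The Cusa–Huygens inequality `3 sin u ≤ u (2 + cos u)`, written at `u = 2x`. -/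
lemma three_mul_sin_mul_cos_le {x : ℝ} (hx₀ : 0 ≤ x) (hx : x ≤ π / 2) :
    3 * (sin x * cos x) ≤ x * (1 + 2 * cos x ^ 2) := by
  let f : ℝ → ℝ := fun y => y * (1 + 2 * cos y ^ 2) - 3 * (sin y * cos y)
  have hf : ∀ y, HasDerivAt f (4 * sin y * (sin y - y * cos y)) y := by
    intro y
    refine (((hasDerivAt_id' y).mul (((hasDerivAt_cos y).pow 2).const_mul 2 |>.const_add 1)).sub
      (((hasDerivAt_sin y).mul (hasDerivAt_cos y)).const_mul 3)).congr_deriv ?_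
    simp only [Pi.pow_apply]
    linear_combination (-1 : ℝ) * sin_sq_add_cos_sq y
  have hmono : MonotoneOn f (Icc 0 (π / 2)) := by
    refine monotoneOn_of_deriv_nonneg (convex_Icc _ _)
      (fun y _ => (hf y).continuousAt.continuousWithinAt)
      (fun y _ => (hf y).differentiableAt.differentiableWithinAt) fun y hy => ?_
    rw [interior_Icc] at hy
    rw [(hf y).deriv]
    have hsin : 0 ≤ sin y := sin_nonneg_of_nonneg_of_le_pi hy.1.le (by linarith [hy.2, pi_pos])
    have : 0 ≤ sin y - y * cos y :=
      sub_nonneg.2 (mul_cos_le_sin hy.1.le (by linarith [hy.2, pi_pos]))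
    positivity
  have := hmono ⟨le_rfl, by positivity⟩ ⟨hx₀, hx⟩ hx₀
  simp only [f, sin_zero, zero_mul, mul_zero, sub_zero] at this
  linarith

lemma antitoneOn_pow_three_mul_cos_div_sin_pow_three :
    AntitoneOn (fun x => x ^ 3 * cos x / sin x ^ 3) (Ioc 0 (π / 2)) := by
  have hsin : ∀ x ∈ Ioc 0 (π / 2), sin x ≠ 0 := fun x hx =>
    (sin_pos_of_pos_of_lt_pi hx.1 (by linarith [hx.2, pi_pos])).ne'
  have hderiv : ∀ x ∈ Ioc 0 (π / 2), HasDerivAt (fun x => x ^ 3 * cos x / sin x ^ 3)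
      (x ^ 2 * sin x ^ 2 * (3 * (sin x * cos x) - x * (1 + 2 * cos x ^ 2)) / (sin x ^ 3) ^ 2) x :=
    fun x hx => (((hasDerivAt_pow 3 x).mul (hasDerivAt_cos x)).div
      ((hasDerivAt_sin x).pow 3) (pow_ne_zero 3 (hsin x hx))).congr_deriv (by
        simp only [Pi.mul_apply, Pi.pow_apply]
        congr 1
        linear_combination (-(x ^ 3) * sin x ^ 2) * sin_sq_add_cos_sq x)
  refine antitoneOn_of_deriv_nonpos (convex_Ioc _ _)
    (fun x hx => (hderiv x hx).continuousAt.continuousWithinAt)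
    (fun x hx => (hderiv x (Ioo_subset_Ioc_self (by rwa [interior_Ioc] at hx))).differentiableAt
      |>.differentiableWithinAt) fun x hx => ?_
  rw [interior_Ioc] at hx
  rw [(hderiv x (Ioo_subset_Ioc_self hx)).deriv]
  have : 3 * (sin x * cos x) - x * (1 + 2 * cos x ^ 2) ≤ 0 :=
    sub_nonpos.2 (three_mul_sin_mul_cos_le hx.1.le hx.2.le)
  exact div_nonpos_of_nonpos_of_nonneg (mul_nonpos_of_nonneg_of_nonpos (by positivity) this)
    (by positivity)

lemma sin_two_mul_div_le_pow_four {a t : ℝ} (ha : 1 < a) (ht : 0 < t) (hat : a * t ≤ π / 2) :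
    sin (2 * a * t) / (a * sin (2 * t)) ≤ (sin (a * t) / (a * sin t)) ^ 4 := by
  have hta : t < a * t := lt_mul_of_one_lt_left ht ha
  have hsint : 0 < sin t := sin_pos_of_pos_of_lt_pi ht (by linarith [pi_pos])
  have hsinat : 0 < sin (a * t) := sin_pos_of_pos_of_lt_pi (by linarith) (by linarith [pi_pos])
  have hcost : 0 < cos t := cos_pos_of_mem_Ioo ⟨by linarith [pi_pos], by linarith⟩
  have key : a ^ 3 * sin t ^ 3 * cos (a * t) ≤ sin (a * t) ^ 3 * cos t := by
    have := antitoneOn_pow_three_mul_cos_div_sin_pow_three ⟨ht, by linarith⟩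
      ⟨by linarith, hat⟩ hta.le
    rw [div_le_div_iff₀ (by positivity) (by positivity)] at this
    refine le_of_mul_le_mul_left ?_ (by positivity : 0 < t ^ 3)
    convert this using 1 <;> ring
  rw [mul_assoc, sin_two_mul, sin_two_mul, div_pow, div_le_div_iff₀ (by positivity) (by positivity)]
  have := mul_le_mul_of_nonneg_left key (by positivity : 0 ≤ 2 * a * sin (a * t) * sin t)
  linarith

theorem GA_y_le_x_pow_four (A : ℤ) (hA : 3 ≤ A) (t : ℝ) (ht0 : 0 < t)
    (ht1 : t ≤ π / (2 * A)) :
    Real.sin (2 * A * t) / (A * Real.sin (2 * t)) ≤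
      (Real.sin (A * t) / (A * Real.sin t)) ^ 4 := by
  have hA_real : (3 : ℝ) ≤ A := by exact_mod_cast hA
  rw [le_div_iff₀ (by positivity)] at ht1
  exact sin_two_mul_div_le_pow_four (by linarith) ht0 (by linarith)
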